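/- For every integer k with 2 ≤ k ≤ n, t(n, k, n−2) = n − 1, where t(n,k,ℓ) denotes the minimal number of edges of a connected graph G of order n with rvx_k(G) ≤ ℓ. -/

import Mathlib

/-- A vertex-coloring `c` makes `G` vertex-rainbow `k`-tree-connected using at most `m`
colors (on Steiner vertices): every `k`-subset `S` of vertices admits a connected subgraph
(equivalently, a Steiner tree) containing `S` whose vertices outside `S` receive pairwise
distinct colors, all drawn from a palette of `m` colors. -/
def hasRvxColoring {V : Type*} (G : SimpleGraph V) (k m : ℕ) : Prop :=
  ∃ c : V → ℕ, ∀ S : Finset V, S.card = k →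
    ∃ T : G.Subgraph, T.Connected ∧ ↑S ⊆ T.verts ∧
      Set.InjOn c (T.verts \ ↑S) ∧ ∀ v ∈ T.verts \ (↑S : Set V), c v < m

/-- The `k`-vertex-rainbow index `rvx_k(G)`. -/
noncomputable def rvx {V : Type*} (G : SimpleGraph V) (k : ℕ) : ℕ :=
  sInf {m | hasRvxColoring G k m}

/-- The Steiner distance of a vertex set `S`: the minimum number of edges of a connected
subgraph of `G` containing `S`. -/
noncomputable def steinerDist {V : Type*} (G : SimpleGraph V) (S : Set V) : ℕ :=
  sInf {m | ∃ T : G.Subgraph, T.Connected ∧ S ⊆ T.verts ∧ T.edgeSet.ncard = m}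

/-- The Steiner `k`-diameter of `G`. -/
noncomputable def sdiam {V : Type*} [Fintype V] [DecidableEq V]
    (G : SimpleGraph V) (k : ℕ) : ℕ :=
  (Finset.univ.powersetCard k).sup fun S : Finset V => steinerDist G (S : Set V)

/-- `t(n,k,ℓ)`: the minimal number of edges of a connected graph of order `n`
with `rvx_k(G) ≤ ℓ`. -/
noncomputable def minSize (n k l : ℕ) : ℕ :=
  sInf {m | ∃ G : SimpleGraph (Fin n), G.Connected ∧ rvx G k ≤ l ∧ G.edgeSet.ncard = m}

/-! Every connected graph of order `n` has at least `n - 1` edges, and the path `P_n` attains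
this bound with `rvx_k(P_n) ≤ n - 2`: a Steiner tree of `S` is the subpath between `min S` and
`max S`, whose Steiner vertices are inner vertices of the path, and the `n - 2` inner vertices
can all be coloured differently. -/

namespace SimpleGraph

lemma pathGraph_exists_walk_support_Icc {n : ℕ} {i j : Fin n} (hij : i ≤ j) :
    ∃ w : (pathGraph n).Walk i j, ∀ v, v ∈ w.support ↔ v ∈ Set.Icc i j := by
  obtain ⟨d, hd⟩ : ∃ d, i.val + d = j.val := ⟨j - i, by omega⟩
  induction d generalizing i with
  | zero =>
    obtain rfl : i = j := Fin.ext (by omega)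
    exact ⟨.nil, fun v => by simp [le_antisymm_iff, and_comm]⟩
  | succ d ih =>
    have hi : i.val + 1 < n := by omega
    obtain ⟨w, hw⟩ := ih (i := ⟨i + 1, hi⟩) (Fin.mk_le_of_le_val (by omega)) (by simp; omega)
    have hadj : (pathGraph n).Adj i ⟨i + 1, hi⟩ := pathGraph_adj.mpr (Or.inl rfl)
    refine ⟨.cons hadj w, fun v => ?_⟩
    simp only [Walk.support_cons, List.mem_cons, hw, Set.mem_Icc, Fin.ext_iff, Fin.le_def]
    omega

lemma pathGraph_edgeSet_ncard (n : ℕ) : (pathGraph n).edgeSet.ncard = n - 1 := by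
  let edge (i : Fin (n - 1)) : Sym2 (Fin n) := s(⟨i, by omega⟩, ⟨i + 1, by omega⟩)
  have hrange : (pathGraph n).edgeSet = Set.range edge := by
    ext e
    induction e using Sym2.ind with
    | _ u v =>
      simp only [edge, mem_edgeSet, pathGraph_adj, Set.mem_range, Sym2.eq_iff, Fin.ext_iff]
      constructor
      · rintro (h | h)
        · exact ⟨⟨u, by omega⟩, Or.inl (by simp; omega)⟩
        · exact ⟨⟨v, by omega⟩, Or.inr (by simp; omega)⟩
      · rintro ⟨i, ⟨h1, h2⟩ | ⟨h1, h2⟩⟩ <;> omega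
  have hinj : Function.Injective edge := fun i j hij => by
    simp only [edge, Sym2.eq_iff, Fin.ext_iff] at hij
    exact Fin.ext (by omega)
  rw [hrange, ← Set.image_univ, Set.ncard_image_of_injective _ hinj, Set.ncard_univ,
    Nat.card_fin]

end SimpleGraph

open SimpleGraph

lemma rvx_le_of_hasRvxColoring {V : Type*} {G : SimpleGraph V} {k m : ℕ}
    (h : hasRvxColoring G k m) : rvx G k ≤ m :=
  Nat.sInf_le h

lemma hasRvxColoring_pathGraph (n : ℕ) {k : ℕ} (hk : 1 ≤ k) :
    hasRvxColoring (pathGraph n) k (n - 2) := by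
  refine ⟨fun v => v - 1, fun S hS => ?_⟩
  have hS : S.Nonempty := by rw [← Finset.card_pos, hS]; omega
  obtain ⟨w, hw⟩ := pathGraph_exists_walk_support_Icc (S.min'_le _ (S.max'_mem hS))
  have hinner : ∀ v ∈ w.toSubgraph.verts \ S, S.min' hS < v ∧ v < S.max' hS := by
    rintro v ⟨hv, hvS⟩
    rw [Walk.mem_verts_toSubgraph, hw] at hv
    exact ⟨hv.1.lt_of_ne (fun h => hvS (h ▸ S.min'_mem hS)),
      hv.2.lt_of_ne (fun h => hvS (h ▸ S.max'_mem hS))⟩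
  refine ⟨w.toSubgraph, w.toSubgraph_connected, fun v hv => ?_, fun x hx y hy hxy => ?_,
    fun v hv => ?_⟩
  · rw [Walk.mem_verts_toSubgraph, hw]
    exact ⟨S.min'_le v hv, S.le_max' v hv⟩
  · have := (hinner x hx).1
    have := (hinner y hy).1
    exact Fin.ext (by dsimp only at hxy; omega)
  · have := hinner v hv
    have := (S.max' hS).isLt
    dsimp only
    omega

/-- `t(n, k, n-2) = n - 1` for `2 ≤ k ≤ n`. -/
theorem minSize_ell_eq (n k : ℕ) (hk : 2 ≤ k) (hk' : k ≤ n) :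
    minSize n k (n - 2) = n - 1 := by
  obtain ⟨m, rfl⟩ : ∃ m, n = m + 1 := ⟨n - 1, by omega⟩
  have hpath : m + 1 - 1 ∈ {e | ∃ G : SimpleGraph (Fin (m + 1)), G.Connected ∧
      rvx G k ≤ m + 1 - 2 ∧ G.edgeSet.ncard = e} :=
    ⟨pathGraph (m + 1), pathGraph_connected m,
      rvx_le_of_hasRvxColoring (hasRvxColoring_pathGraph _ (by omega)), pathGraph_edgeSet_ncard _⟩
  refine le_antisymm (Nat.sInf_le hpath) (le_csInf ⟨_, hpath⟩ ?_)
  rintro _ ⟨G, hG, -, rfl⟩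
  simpa [Nat.card_coe_set_eq] using hG.card_vert_le_card_edgeSet_add_one
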